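/- For m ∈ {0,1} and all i ≥ 0, L*_{2i+m}(1, -q, 1/q) · q^{2i² - i + 2mi} = L*_{2i+m}(1, -1, q²). -/

import Mathlib

/-!
Write `F_n(t)` for `qF a 1 t n`. The q-Lucas polynomial satisfies
`L_{n+1}(s) = F_{n+2}(s) + s F_n(s)`, and the two q-Pascal rules give the order-four recurrence
`F_{n+4}(t) = F_{n+3}(t) + t a^{n+2} (F_{n+1}(t) + t F_n(t))`.
At `t = -1/a` it is solved by Euler's pentagonal pattern `F_{3r} = 0`,
`F_{3r+1} = (-1)^r a^{p(r)}`, `F_{3r+2} = (-1)^r a^{p(-r)}`, with `p(k) = k(3k-1)/2`.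
Both `L_n(1, -1/a, a)` and `L_n(1, -1, a)` are two-term combinations of these values, so for
`a = 1/q` and `a = q^2` both sides of the identity are the same signed monomials in `q` (sums of
two of them when `3 ∣ n`) once the factor `q^(n choose 2)` is included.
-/

open Finset

noncomputable section

abbrev K : Type := RatFunc ℚ

def q : K := RatFunc.X

def qint (a : K) (m : ℕ) : K := ∑ i ∈ range m, a ^ i

def qfact (a : K) (m : ℕ) : K := ∏ i ∈ range m, qint a (i + 1)

def qbinom (a : K) (n k : ℕ) : K :=
  if k ≤ n then qfact a n / (qfact a k * qfact a (n - k)) else 0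

/-- q-Fibonacci polynomials F_n(x,s,q) with base `a`. -/
def qF (a x s : K) : ℕ → K
  | 0 => 0
  | n + 1 => ∑ k ∈ range (n / 2 + 1),
      a ^ (k * (k + 1) / 2) * qbinom a (n - k) k * s ^ k * x ^ (n - 2 * k)

/-- q-Lucas polynomials L_n(x,s,q) with base `a` (L_0 = 2). -/
def qL (a x s : K) (n : ℕ) : K :=
  if n = 0 then 2 else
  ∑ k ∈ range (n / 2 + 1),
    a ^ (k * (k - 1) / 2) * (qint a n / qint a (n - k)) * qbinom a (n - k) k
      * s ^ k * x ^ (n - 2 * k)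

/-- Starred variant: L*_0 = 1, L*_n = L_n for n > 0. -/
def qLs (a x s : K) (n : ℕ) : K := if n = 0 then 1 else qL a x s n

/-- Rogers-Szegő polynomial. -/
def rs (a x y : K) (m : ℕ) : K := ∑ j ∈ range (m + 1), qbinom a m j * x ^ j * y ^ (m - j)

/-- q-Pochhammer (q;q)_m. -/
def qpoch (a : K) (m : ℕ) : K := ∏ j ∈ range m, (1 - a ^ (j + 1))

section QBinomial

variable {a : K}

theorem qint_add (m n : ℕ) : qint a (m + n) = qint a m + a ^ m * qint a n := by
  simp only [qint, sum_range_add, mul_sum, pow_add]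

theorem qfact_succ (n : ℕ) : qfact a (n + 1) = qfact a n * qint a (n + 1) :=
  Finset.prod_range_succ _ n

theorem qfact_ne_zero (ha : ∀ n, qint a (n + 1) ≠ 0) (n : ℕ) : qfact a n ≠ 0 :=
  Finset.prod_ne_zero_iff.2 fun i _ => ha i

theorem qbinom_of_le {n k : ℕ} (h : k ≤ n) :
    qbinom a n k = qfact a n / (qfact a k * qfact a (n - k)) := if_pos h

theorem qbinom_of_lt {n k : ℕ} (h : n < k) : qbinom a n k = 0 := if_neg (by omega)

theorem qbinom_zero_right (ha : ∀ n, qint a (n + 1) ≠ 0) (n : ℕ) : qbinom a n 0 = 1 := by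
  rw [qbinom_of_le n.zero_le, Nat.sub_zero, show qfact a 0 = 1 from Finset.prod_range_zero _,
    one_mul, div_self (qfact_ne_zero ha n)]

theorem qint_mul_qbinom_succ_succ (ha : ∀ n, qint a (n + 1) ≠ 0) (m k : ℕ) :
    qint a (k + 1) * qbinom a (m + 1) (k + 1) = qint a (m + 1) * qbinom a m k := by
  rcases le_or_gt k m with hk | hk
  · rw [qbinom_of_le (by omega), qbinom_of_le hk, Nat.add_sub_add_right, qfact_succ,
      qfact_succ]
    have := qfact_ne_zero ha k
    have := qfact_ne_zero ha (m - k)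
    have := ha k
    field_simp
  · rw [qbinom_of_lt (by omega), qbinom_of_lt hk, mul_zero, mul_zero]

theorem qint_mul_qbinom_succ_right (ha : ∀ n, qint a (n + 1) ≠ 0) (m k : ℕ) :
    qint a (k + 1) * qbinom a m (k + 1) = qint a (m - k) * qbinom a m k := by
  rcases lt_or_ge k m with hk | hk
  · obtain ⟨d, rfl⟩ : ∃ d, m = k + 1 + d := ⟨m - k - 1, by omega⟩
    rw [qbinom_of_le (by omega), qbinom_of_le (by omega), show k + 1 + d - (k + 1) = d by omega,
      show k + 1 + d - k = d + 1 by omega, qfact_succ k, qfact_succ d]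
    have := qfact_ne_zero ha k
    have := qfact_ne_zero ha d
    have := ha k
    have := ha d
    field_simp
  · rw [qbinom_of_lt (by omega), Nat.sub_eq_zero_of_le hk,
      show qint a 0 = 0 from Finset.sum_range_zero _, mul_zero, zero_mul]

theorem qbinom_succ_succ (ha : ∀ n, qint a (n + 1) ≠ 0) (m k : ℕ) :
    qbinom a (m + 1) (k + 1) = a ^ (k + 1) * qbinom a m (k + 1) + qbinom a m k := by
  refine mul_left_cancel₀ (ha k) ?_
  rw [qint_mul_qbinom_succ_succ ha, mul_add, mul_left_comm, qint_mul_qbinom_succ_right ha]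
  rcases le_or_gt k m with hk | hk
  · rw [show m + 1 = (k + 1) + (m - k) by omega, qint_add]
    ring
  · simp [qbinom_of_lt hk]

theorem qbinom_succ_succ' (ha : ∀ n, qint a (n + 1) ≠ 0) (m k : ℕ) :
    qbinom a (m + 1) (k + 1) = qbinom a m (k + 1) + a ^ (m - k) * qbinom a m k := by
  refine mul_left_cancel₀ (ha k) ?_
  rw [qint_mul_qbinom_succ_succ ha, mul_add, mul_left_comm _ (a ^ _),
    qint_mul_qbinom_succ_right ha]
  rcases le_or_gt k m with hk | hk
  · rw [show m + 1 = (m - k) + (k + 1) by omega, qint_add]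
    ring
  · simp [qbinom_of_lt hk]

end QBinomial

theorem Nat.add_one_mul_add_two_div_two (k : ℕ) :
    (k + 1) * (k + 2) / 2 = k * (k + 1) / 2 + (k + 1) := by
  rw [show (k + 1) * (k + 2) = k * (k + 1) + (k + 1) * 2 by ring, Nat.add_mul_div_right _ _ two_pos]

theorem Finset.sum_range_succ_eq_add_of_succ {M : Type*} [AddCommMonoid M] {f g h : ℕ → M}
    {m : ℕ} (h₀ : f 0 = g 0) (hs : ∀ k < m, f (k + 1) = g (k + 1) + h k) :
    ∑ k ∈ range (m + 1), f k = ∑ k ∈ range (m + 1), g k + ∑ k ∈ range m, h k := by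
  rw [sum_range_succ', sum_range_succ', sum_congr rfl fun k hk => hs k (mem_range.1 hk),
    sum_add_distrib, h₀, add_right_comm]

section QFibonacci

variable {a : K}

@[simp]
theorem qF_zero (x s : K) : qF a x s 0 = 0 := rfl

theorem qF_one (s : K) : qF a 1 s 1 = 1 := by
  simp [qF, qbinom, qfact]

theorem qF_two (s : K) : qF a 1 s 2 = 1 := by
  simp [qF, qbinom, qfact, qint]

theorem qF_succ_eq_sum (s : K) {n m : ℕ} (hm : n < 2 * m) :
    qF a 1 s (n + 1) = ∑ k ∈ range m, a ^ (k * (k + 1) / 2) * qbinom a (n - k) k * s ^ k := by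
  simp only [qF, one_pow, mul_one]
  refine sum_subset (range_subset_range.2 (by omega)) fun k hk hk' => ?_
  simp only [mem_range] at hk hk'
  rw [qbinom_of_lt (by omega), mul_zero, zero_mul]

theorem qF_add_two_eq_qF_mul (ha : ∀ n, qint a (n + 1) ≠ 0) (u : K) (n : ℕ) :
    qF a 1 u (n + 2) = qF a 1 (a * u) (n + 1) + a * u * qF a 1 (a * u) n := by
  rcases n with _ | n
  · simp [qF_one, qF_two]
  rw [qF_succ_eq_sum u (m := n / 2 + 2) (by omega), qF_succ_eq_sum (a * u) (m := n / 2 + 2)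
    (by omega), qF_succ_eq_sum (a * u) (m := n / 2 + 1) (by omega), mul_sum]
  refine sum_range_succ_eq_add_of_succ (by simp [qbinom_zero_right ha]) fun k hk => ?_
  rw [show n + 1 + 1 - (k + 1) = n - k + 1 by omega, Nat.add_sub_add_right,
    qbinom_succ_succ ha, Nat.add_one_mul_add_two_div_two]
  ring

theorem qF_add_two_eq_qF_div (ha : ∀ n, qint a (n + 1) ≠ 0) (ha₀ : a ≠ 0) (s : K)
    (n : ℕ) :
    qF a 1 s (n + 2) = qF a 1 s (n + 1) + s * a ^ n * qF a 1 (s / a) n := by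
  rcases n with _ | n
  · simp [qF_one, qF_two]
  rw [qF_succ_eq_sum s (m := n / 2 + 2) (by omega), qF_succ_eq_sum s (m := n / 2 + 2)
    (by omega), qF_succ_eq_sum (s / a) (m := n / 2 + 1) (by omega), mul_sum]
  refine sum_range_succ_eq_add_of_succ (by simp [qbinom_zero_right ha]) fun k hk => ?_
  rw [show n + 1 + 1 - (k + 1) = n - k + 1 by omega, Nat.add_sub_add_right,
    qbinom_succ_succ' ha, Nat.add_one_mul_add_two_div_two,
    show n + 1 = (n - k - k) + k + (k + 1) by omega, div_pow, pow_add, pow_add]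
  field_simp
  ring

theorem qL_succ_eq_qF (ha : ∀ n, qint a (n + 1) ≠ 0) (s : K) (n : ℕ) :
    qL a 1 s (n + 1) = qF a 1 s (n + 2) + s * qF a 1 s n := by
  rcases n with _ | n
  · simp [qL, qbinom, qfact, qint, qF_two]
  rw [qL, if_neg (by omega), show (n + 1 + 1) / 2 + 1 = n / 2 + 2 by omega,
    qF_succ_eq_sum s (m := n / 2 + 2) (by omega), qF_succ_eq_sum s (m := n / 2 + 1) (by omega),
    mul_sum]
  simp only [one_pow, mul_one]
  refine sum_range_succ_eq_add_of_succ (by simp [qbinom_zero_right ha, div_self (ha _)])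
    fun k hk => ?_
  have key : qint a (n + 1 + 1) / qint a (n - k + 1) * qbinom a (n - k + 1) (k + 1)
      = a ^ (k + 1) * qbinom a (n - k + 1) (k + 1) + qbinom a (n - k) k := by
    rw [div_mul_eq_mul_div, div_eq_iff (ha _), show n + 1 + 1 = (k + 1) + (n - k + 1) by omega,
      qint_add, add_mul, qint_mul_qbinom_succ_succ ha]
    ring
  rw [show n + 1 + 1 - (k + 1) = n - k + 1 by omega, mul_assoc (a ^ _), key,
    Nat.add_one_mul_add_two_div_two, add_tsub_cancel_right, mul_comm (k + 1) k]
  ring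

theorem qF_add_four (ha : ∀ n, qint a (n + 1) ≠ 0) (ha₀ : a ≠ 0) (t : K) (n : ℕ) :
    qF a 1 t (n + 4) =
      qF a 1 t (n + 3) + t * a ^ (n + 2) * (qF a 1 t (n + 1) + t * qF a 1 t n) := by
  rw [qF_add_two_eq_qF_div ha ha₀ t (n + 2), qF_add_two_eq_qF_mul ha (t / a) n,
    mul_div_cancel₀ _ ha₀]

end QFibonacci

theorem pentagonal_natCast_add_one (r : ℕ) :
    pentagonal ((r : ℤ) + 1) = pentagonal (r : ℤ) + 3 * r + 1 := by
  have := two_mul_natCast_pentagonal ((r : ℤ) + 1)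
  have := two_mul_natCast_pentagonal (r : ℤ)
  zify
  linarith

theorem pentagonal_neg_natCast (r : ℕ) : pentagonal (-(r : ℤ)) = pentagonal (r : ℤ) + r := by
  have := two_mul_natCast_pentagonal_neg (r : ℤ)
  have := two_mul_natCast_pentagonal (r : ℤ)
  zify
  linarith

section Evaluation

variable {a : K}

theorem qF_neg_inv_pentagonal (ha : ∀ n, qint a (n + 1) ≠ 0) (ha₀ : a ≠ 0) (r : ℕ) :
    qF a 1 (-a⁻¹) (3 * r) = 0 ∧ qF a 1 (-a⁻¹) (3 * r + 1) = (-1) ^ r * a ^ pentagonal r ∧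
      qF a 1 (-a⁻¹) (3 * r + 2) = (-1) ^ r * a ^ pentagonal (-r) := by
  suffices h : ∀ r : ℕ, (qF a 1 (-a⁻¹) (3 * r) = 0 ∧
      qF a 1 (-a⁻¹) (3 * r + 1) = (-1) ^ r * a ^ pentagonal r ∧
      qF a 1 (-a⁻¹) (3 * r + 2) = (-1) ^ r * a ^ pentagonal (-r)) ∧
      qF a 1 (-a⁻¹) (3 * r + 3) = 0
    from (h r).1
  -- the recurrence has order four, so the induction also carries the value at `3 * r + 3`
  intro r
  induction r with
  | zero =>
    refine ⟨⟨rfl, by simp [pentagonal, qF_one], by simp [pentagonal, qF_two]⟩, ?_⟩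
    rw [qF_add_two_eq_qF_mul ha _ 1, qF_one, qF_two, mul_neg, mul_inv_cancel₀ ha₀]
    ring
  | succ r ih =>
    obtain ⟨⟨h₀, h₁, h₂⟩, h₃⟩ := ih
    rw [pentagonal_neg_natCast] at h₂ ⊢
    push_cast
    rw [pentagonal_natCast_add_one]
    have h₄ : qF a 1 (-a⁻¹) (3 * r + 4) =
        (-1) ^ (r + 1) * a ^ (pentagonal (r : ℤ) + 3 * r + 1) := by
      rw [qF_add_four ha ha₀ _ (3 * r), h₃, h₁, h₀]
      field_simp
      ring
    have h₅ : qF a 1 (-a⁻¹) (3 * r + 5) =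
        (-1) ^ (r + 1) * a ^ (pentagonal (r : ℤ) + 4 * r + 2) := by
      rw [qF_add_four ha ha₀ _ (3 * r + 1), h₄, h₂, h₁]
      field_simp
      ring
    have h₆ : qF a 1 (-a⁻¹) (3 * r + 6) = 0 := by
      rw [qF_add_four ha ha₀ _ (3 * r + 2), h₅, h₃, h₂]
      field_simp
      ring
    refine ⟨⟨h₃, h₄, h₅.trans ?_⟩, h₆⟩
    ring

theorem qL_neg_inv (ha : ∀ n, qint a (n + 1) ≠ 0) (n : ℕ) :
    qL a 1 (-a⁻¹) (n + 1) = qF a 1 (-a⁻¹) (n + 2) - a⁻¹ * qF a 1 (-a⁻¹) n := by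
  rw [qL_succ_eq_qF ha]
  ring

theorem qL_neg_one (ha : ∀ n, qint a (n + 1) ≠ 0) (ha₀ : a ≠ 0) (n : ℕ) :
    qL a 1 (-1) (n + 1) = qF a 1 (-a⁻¹) (n + 2) - a ^ n * qF a 1 (-a⁻¹) n := by
  rw [qL_succ_eq_qF ha, qF_add_two_eq_qF_div ha ha₀, qF_add_two_eq_qF_mul ha (-a⁻¹), mul_neg,
    mul_inv_cancel₀ ha₀, neg_div, one_div]
  ring

end Evaluation

theorem Nat.two_mul_choose_two_add_self (n : ℕ) : 2 * n.choose 2 + n = n ^ 2 := by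
  induction n with
  | zero => rfl
  | succ n ih =>
    rw [Nat.choose_succ_succ, Nat.choose_one_right]
    linarith

theorem q_pow_ne_one {n : ℕ} (hn : n ≠ 0) : q ^ n ≠ 1 := by
  intro h
  have hX : (Polynomial.X : Polynomial ℚ) ^ n = 1 :=
    RatFunc.algebraMap_injective ℚ (by simpa [q, RatFunc.algebraMap_X] using h)
  simpa [hn] using congrArg Polynomial.natDegree hX

theorem qint_succ_ne_zero {a : K} (ha : ∀ n, a ^ (n + 1) ≠ 1) (n : ℕ) :
    qint a (n + 1) ≠ 0 := by
  have ha₁ : a ≠ 1 := by simpa using ha 0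
  rw [qint, geom_sum_eq ha₁]
  exact div_ne_zero (sub_ne_zero.2 (ha n)) (sub_ne_zero.2 ha₁)

theorem qint_one_div_q_succ_ne_zero (n : ℕ) : qint (1 / q) (n + 1) ≠ 0 :=
  qint_succ_ne_zero (fun k => by
    rw [one_div, inv_pow, Ne, inv_eq_one]
    exact q_pow_ne_one k.succ_ne_zero) n

theorem qint_q_sq_succ_ne_zero (n : ℕ) : qint (q ^ 2) (n + 1) ≠ 0 :=
  qint_succ_ne_zero (fun k => by rw [← pow_mul]; exact q_pow_ne_one (by omega)) n

theorem qL_one_div_q_mul_pow_choose_two (n : ℕ) :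
    qL (1 / q) 1 (-q) (n + 1) * q ^ (n + 1).choose 2 = qL (q ^ 2) 1 (-1) (n + 1) := by
  have hq : q ≠ 0 := RatFunc.X_ne_zero
  have hA := qint_one_div_q_succ_ne_zero
  have hB := qint_q_sq_succ_ne_zero
  have hA₀ : 1 / q ≠ 0 := one_div_ne_zero hq
  have hB₀ : q ^ 2 ≠ 0 := pow_ne_zero 2 hq
  rw [show -q = -(1 / q)⁻¹ by rw [one_div, inv_inv], qL_neg_inv hA, qL_neg_one hB hB₀]
  obtain ⟨r, j, hj, rfl⟩ : ∃ r j, j < 3 ∧ n = 3 * r + j :=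
    ⟨n / 3, n % 3, by omega, by omega⟩
  obtain ⟨A₀, A₁, A₂⟩ := qF_neg_inv_pentagonal hA hA₀ r
  obtain ⟨B₀, B₁, B₂⟩ := qF_neg_inv_pentagonal hB hB₀ r
  obtain ⟨A₃, A₄, -⟩ := qF_neg_inv_pentagonal hA hA₀ (r + 1)
  obtain ⟨B₃, B₄, -⟩ := qF_neg_inv_pentagonal hB hB₀ (r + 1)
  have hC := Nat.two_mul_choose_two_add_self (3 * r + j + 1)
  have hP := two_mul_natCast_pentagonal (r : ℤ)
  simp only [pentagonal_neg_natCast, Nat.cast_add, Nat.cast_one, pentagonal_natCast_add_one]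
    at A₂ B₂ A₄ B₄
  interval_cases j
  · have e : (3 * r + 1).choose 2 = 3 * (pentagonal (r : ℤ) + r) := by zify at hC ⊢; linarith
    rw [add_zero, e, A₀, A₂, B₀, B₂]
    simp only [one_div, inv_pow]
    field_simp
    ring
  · have e : (3 * r + 1 + 1).choose 2 = 3 * pentagonal (r : ℤ) + 6 * r + 1 := by
      zify at hC ⊢; linarith
    rw [e, A₁, B₁, show 3 * r + 1 + 2 = 3 * (r + 1) by ring, A₃, B₃]
    simp only [one_div, inv_pow]
    field_simp
    ring
  · have e : (3 * r + 2 + 1).choose 2 = 3 * pentagonal (r : ℤ) + 9 * r + 3 := by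
      zify at hC ⊢; linarith
    rw [e, A₂, B₂, show 3 * r + 2 + 2 = 3 * (r + 1) + 1 by ring, A₄, B₄]
    simp only [one_div, inv_pow]
    field_simp
    ring

theorem qLs_one_div_q_mul_pow_choose_two (N : ℕ) :
    qLs (1 / q) 1 (-q) N * q ^ N.choose 2 = qLs (q ^ 2) 1 (-1) N := by
  rcases N with _ | n
  · simp [qLs]
  · simpa [qLs] using qL_one_div_q_mul_pow_choose_two n

theorem stmt19 (m i : ℕ) (hm : m = 0 ∨ m = 1) :
    qLs (1 / q) 1 (-q) (2 * i + m) * q ^ (2 * i ^ 2 - i + 2 * m * i)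
      = qLs (q ^ 2) 1 (-1) (2 * i + m) := by
  have hC := Nat.two_mul_choose_two_add_self (2 * i + m)
  have hi : i ≤ 2 * i ^ 2 := by nlinarith
  have e : 2 * i ^ 2 - i + 2 * m * i = (2 * i + m).choose 2 := by
    rcases hm with rfl | rfl <;> zify [hi] at hC ⊢ <;> linarith
  rw [e]
  exact qLs_one_div_q_mul_pow_choose_two _
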